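/- arXiv:1606.05198 — 3 statements merged into one kernel-verified Lean document; each statement's English description precedes it below -/
import Mathlib

section
/- Let G = (V,E) be a finite simple graph and w a positive integer. Suppose F ⊆ E is a set of edges such that for every subset S ⊆ V there exists a set X^S ⊆ V with |X^S| ≤ w which is a 1/2-separator of S in the graph G − F (the graph obtained from G by deleting the edges in F). Then there exist nonnegative vectors x : E → ℝ, and for every S ⊆ V nonnegative vectors y^S : V → ℝ and symmetric nonnegative d^S : V × V → ℝ, such that: (1) ∑_{e ∈ E} x_e = |F|; (2) for every S ⊆ V, ∑_{v ∈ V} y^S_v ≤ w; (3) for every S ⊆ V, all u,v ∈ V and every path P in G from u to v, d^S(u,v) ≤ ∑_{e ∈ E(P)} x_e + ∑_{t ∈ V(P)} y^S_t, where E(P) and V(P) denote the edges and vertices of P (including its endpoints); and (4) for every U ⊆ S ⊆ V and every u ∈ U, ∑_{v ∈ U} d^S(u,v) ≥ |U| − |S|/2. -/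
/-- `u` and `v` are connected in `H` by a walk all of whose vertices avoid `X`. -/
def ReachAvoiding {V : Type*} (H : SimpleGraph V) (X : Set V) (u v : V) : Prop :=
  ∃ p : H.Walk u v, ∀ t ∈ p.support, t ∉ X

/-- `X` is a 1/2-separator of `S` in `H`: every connected component `C` of the subgraph of `H`
induced on the complement of `X` satisfies `|C ∩ S| ≤ |S|/2`. -/
def IsHalfSeparator {V : Type*} [Fintype V] (H : SimpleGraph V) (S X : Finset V) : Prop :=
  ∀ v : V, v ∉ X →
    ((({u | ReachAvoiding H (↑X) u v} ∩ (↑S : Set V)).ncard : ℝ)) ≤ (S.card : ℝ) / 2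

/-!
The LP is satisfied by the integral solution read off `F` and the separators `X^S`: `x` and
`y^S` are the indicators of `F` and `X^S`, and `d^S(u, v)` is `0` or `1` according to whether
`u` and `v` are joined in `G - F` avoiding `X^S`. A path of `G` from `u` to `v` with
`d^S(u, v) = 1` must use an edge of `F` or a vertex of `X^S`; and for `u ∈ U ⊆ S` the vertices
`v ∈ U` with `d^S(u, v) = 0` lie in the component of `u`, which meets `S` in at most `|S|/2`
vertices.
-/

open Finset

section

variable {V : Type*}

section ReachAvoiding

variable {H : SimpleGraph V} {X : Set V} {u v : V}

lemma ReachAvoiding.symm (h : ReachAvoiding H X u v) : ReachAvoiding H X v u := by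
  obtain ⟨p, hp⟩ := h
  exact ⟨p.reverse, by simpa using hp⟩

lemma ReachAvoiding.comm : ReachAvoiding H X u v ↔ ReachAvoiding H X v u :=
  ⟨.symm, .symm⟩

lemma ReachAvoiding.left_notMem (h : ReachAvoiding H X u v) : u ∉ X := by
  obtain ⟨p, hp⟩ := h
  exact hp u p.start_mem_support

lemma SimpleGraph.Walk.reachAvoiding_deleteEdges {G : SimpleGraph V} {F : Set (Sym2 V)}
    (p : G.Walk u v) (hF : ∀ e ∈ p.edges, e ∉ F) (hX : ∀ t ∈ p.support, t ∉ X) :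
    ReachAvoiding (G.deleteEdges F) X u v := by
  refine ⟨p.transfer _ fun e he => ?_, ?_⟩
  · rw [SimpleGraph.edgeSet_deleteEdges]
    exact ⟨p.edges_subset_edgeSet he, hF e he⟩
  simpa only [SimpleGraph.Walk.support_transfer] using hX

end ReachAvoiding

section Indicator

variable {α R : Type*} [Semiring R] [PartialOrder R] [IsOrderedRing R] {s : Set α} {l : List α}

lemma Set.indicator_one_nonneg (a : α) : 0 ≤ s.indicator (1 : α → R) a :=
  Set.indicator_nonneg (fun _ _ => zero_le_one) a

lemma List.sum_map_indicator_one_nonneg : 0 ≤ (l.map (s.indicator (1 : α → R))).sum :=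
  List.sum_nonneg <| by simpa using fun a _ => Set.indicator_one_nonneg a

lemma List.one_le_sum_map_indicator_one {a : α} (hl : a ∈ l) (hs : a ∈ s) :
    1 ≤ (l.map (s.indicator (1 : α → R))).sum :=
  calc 1 = s.indicator (1 : α → R) a := (Set.indicator_of_mem hs 1).symm
    _ ≤ _ := List.single_le_sum (by simpa using fun b _ => Set.indicator_one_nonneg b) _
      (List.mem_map_of_mem hl)

end Indicator

open Classical in
noncomputable def separationDistance (H : SimpleGraph V) (X : Set V) (u v : V) : ℝ :=
  if ReachAvoiding H X u v then 0 else 1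

section separationDistance

variable {H : SimpleGraph V} {X : Set V}

lemma separationDistance_nonneg (u v : V) : 0 ≤ separationDistance H X u v := by
  unfold separationDistance
  split_ifs <;> norm_num

lemma separationDistance_comm (u v : V) :
    separationDistance H X u v = separationDistance H X v u := by
  unfold separationDistance
  rw [ReachAvoiding.comm]

lemma separationDistance_le_sum_walk {G : SimpleGraph V} {F : Set (Sym2 V)} {u v : V}
    (p : G.Walk u v) :
    separationDistance (G.deleteEdges F) X u v ≤
      (p.edges.map (F.indicator 1)).sum + (p.support.map (X.indicator 1)).sum := by
  have hx := p.edges.sum_map_indicator_one_nonneg (s := F) (R := ℝ)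
  have hy := p.support.sum_map_indicator_one_nonneg (s := X) (R := ℝ)
  unfold separationDistance
  split_ifs with hreach
  · positivity
  by_cases hF : ∃ e ∈ p.edges, e ∈ F
  · obtain ⟨e, he, heF⟩ := hF
    linarith [List.one_le_sum_map_indicator_one (R := ℝ) he heF]
  by_cases hX : ∃ t ∈ p.support, t ∈ X
  · obtain ⟨t, ht, htX⟩ := hX
    linarith [List.one_le_sum_map_indicator_one (R := ℝ) ht htX]
  push Not at hF hX
  exact absurd (p.reachAvoiding_deleteEdges hF hX) hreach

end separationDistance

section IsHalfSeparator

variable [Fintype V] {H : SimpleGraph V} {S X U : Finset V}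

open Classical in
lemma IsHalfSeparator.card_reachAvoiding_le (hX : IsHalfSeparator H S X) (hU : U ⊆ S) (u : V) :
    (#{v ∈ U | ReachAvoiding H X u v} : ℝ) ≤ #S / 2 := by
  by_cases huX : u ∈ X
  · rw [filter_false_of_mem fun v _ h => h.left_notMem huX]
    simp only [card_empty, Nat.cast_zero]
    positivity
  refine le_trans ?_ (hX u huX)
  rw [← Set.ncard_coe_finset]
  gcongr
  · exact Set.toFinite _
  intro v hv
  simp only [coe_filter, Set.mem_ofPred] at hv
  exact ⟨hv.2.symm, hU hv.1⟩

lemma IsHalfSeparator.card_sub_le_sum_separationDistance (hX : IsHalfSeparator H S X)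
    (hU : U ⊆ S) (u : V) :
    (#U : ℝ) - #S / 2 ≤ ∑ v ∈ U, separationDistance H X u v := by
  classical
  have hsplit := card_filter_add_card_filter_not (s := U) (ReachAvoiding H X u)
  have hsum : ∑ v ∈ U, separationDistance H X u v = #{v ∈ U | ¬ReachAvoiding H X u v} := by
    simp [separationDistance, sum_ite]
  have := hX.card_reachAvoiding_le hU u
  rw [hsum, ← hsplit]
  push_cast
  linarith

end IsHalfSeparator

end

theorem lp_relaxation_of_interdiction_general
    {V : Type*} [Fintype V] (G : SimpleGraph V) [DecidableRel G.Adj]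
    (w : ℕ) (F : Finset (Sym2 V)) (hF : (↑F : Set (Sym2 V)) ⊆ G.edgeSet)
    (hsep : ∀ S : Finset V, ∃ X : Finset V, X.card ≤ w ∧
      IsHalfSeparator (G.deleteEdges (↑F : Set (Sym2 V))) S X) :
    ∃ (x : Sym2 V → ℝ) (y : Finset V → V → ℝ) (d : Finset V → V → V → ℝ),
      (∀ e, 0 ≤ x e) ∧
      (∀ S v, 0 ≤ y S v) ∧
      (∀ S u v, 0 ≤ d S u v) ∧
      (∀ S u v, d S u v = d S v u) ∧
      (∑ e ∈ G.edgeFinset, x e = (F.card : ℝ)) ∧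
      (∀ S : Finset V, ∑ v : V, y S v ≤ (w : ℝ)) ∧
      (∀ (S : Finset V) (u v : V) (p : G.Walk u v), p.IsPath →
        d S u v ≤ (p.edges.map x).sum + (p.support.map (y S)).sum) ∧
      (∀ (S U : Finset V), U ⊆ S → ∀ u ∈ U,
        (U.card : ℝ) - (S.card : ℝ) / 2 ≤ ∑ v ∈ U, d S u v) := by
  choose X hXcard hXsep using hsep
  refine ⟨(F : Set (Sym2 V)).indicator 1, fun S => (X S : Set V).indicator 1,
    fun S => separationDistance (G.deleteEdges F) (X S),
    Set.indicator_one_nonneg, fun _ => Set.indicator_one_nonneg,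
    fun _ => separationDistance_nonneg, fun _ => separationDistance_comm, ?_, fun S => ?_,
    fun _ _ _ p _ => separationDistance_le_sum_walk p,
    fun S _ hU u _ => (hXsep S).card_sub_le_sum_separationDistance hU u⟩
  · rw [sum_indicator_subset _ fun e he => by simpa using hF he]
    simp
  · rw [sum_indicator_subset _ (subset_univ _)]
    simpa using hXcard S

/-- LP (1) of the paper is a relaxation of the Bounded Treewidth Interdiction problem
(Lemma 3.1): if removing the edge set `F` from `G` leaves a graph in which every vertex set
`S` has a 1/2-separator of size at most `w`, then there is a feasible LP solution
`(x, y, d)` of value `|F|`. -/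
theorem lp_relaxation_of_interdiction
    {V : Type*} [Fintype V] [DecidableEq V] (G : SimpleGraph V) [DecidableRel G.Adj]
    (w : ℕ) (hw : 0 < w) (F : Finset (Sym2 V)) (hF : (↑F : Set (Sym2 V)) ⊆ G.edgeSet)
    (hsep : ∀ S : Finset V, ∃ X : Finset V, X.card ≤ w ∧
      IsHalfSeparator (G.deleteEdges (↑F : Set (Sym2 V))) S X) :
    ∃ (x : Sym2 V → ℝ) (y : Finset V → V → ℝ) (d : Finset V → V → V → ℝ),
      (∀ e, 0 ≤ x e) ∧
      (∀ S v, 0 ≤ y S v) ∧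
      (∀ S u v, 0 ≤ d S u v) ∧
      (∀ S u v, d S u v = d S v u) ∧
      (∑ e ∈ G.edgeFinset, x e = (F.card : ℝ)) ∧
      (∀ S : Finset V, ∑ v : V, y S v ≤ (w : ℝ)) ∧
      (∀ (S : Finset V) (u v : V) (p : G.Walk u v), p.IsPath →
        d S u v ≤ (p.edges.map x).sum + (p.support.map (y S)).sum) ∧
      (∀ (S U : Finset V), U ⊆ S → ∀ u ∈ U,
        (U.card : ℝ) - (S.card : ℝ) / 2 ≤ ∑ v ∈ U, d S u v) :=
  lp_relaxation_of_interdiction_general G w F hF hsep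
end

section
/- Let b > 0 and let f : ℝ → ℝ be nondecreasing with f(r) > 0 for all r ∈ [0,b], and let C > 0. Then the Lebesgue measure of the set A = { r ∈ [0,b] : f is differentiable at r and f'(r) > C · ln(e·f(b)/f(r)) · f(r) } is at most (1/C) · ln ln ( e·f(b)/f(0) ). -/
/-!
The substitution `φ = -log log (e·f(b)/f)` turns the bad-radius condition into `C < φ'`, and `φ`
is nondecreasing on `[0, b]` with total increase `log log (e·f(b)/f(0))`. For a monotone
function the density of its Stieltjes measure is its a.e. derivative, so the set where the
derivative is at least `C` has Lebesgue measure at most (total increase) / `C`.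
-/

open MeasureTheory Real Set Filter Topology

theorem measurableSet_setOf_differentiableAt_and_le_deriv (g : ℝ → ℝ) (c : ℝ) :
    MeasurableSet {x | DifferentiableAt ℝ g x ∧ c ≤ deriv g x} :=
  (measurableSet_of_differentiableAt ℝ g).inter
    (measurableSet_le measurable_const (measurable_deriv g))

theorem Monotone.ofReal_mul_volume_le_stieltjesFunction_measure {g : ℝ → ℝ} (hg : Monotone g)
    {s : Set ℝ} {c : ℝ} (hs : MeasurableSet s)
    (hderiv : ∀ x ∈ s, DifferentiableAt ℝ g x ∧ c ≤ deriv g x) :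
    ENNReal.ofReal c * volume s ≤ hg.stieltjesFunction.measure s := by
  set μ := hg.stieltjesFunction.measure
  have hc : ∀ᵐ x, x ∈ s → ENNReal.ofReal c ≤ μ.rnDeriv volume x := by
    filter_upwards [hg.ae_hasDerivAt] with x hx hxs
    calc ENNReal.ofReal c ≤ ENNReal.ofReal (μ.rnDeriv volume x).toReal := by
          rw [← hx.deriv]; exact ENNReal.ofReal_le_ofReal (hderiv x hxs).2
      _ ≤ μ.rnDeriv volume x := ENNReal.ofReal_toReal_le
  calc ENNReal.ofReal c * volume s = ∫⁻ _ in s, ENNReal.ofReal c := (setLIntegral_const s _).symm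
    _ ≤ ∫⁻ x in s, μ.rnDeriv volume x := lintegral_mono_ae ((ae_restrict_iff' hs).mpr hc)
    _ ≤ μ s := Measure.setLIntegral_rnDeriv_le s

theorem MonotoneOn.volume_setOf_le_deriv_le {g : ℝ → ℝ} {a b c : ℝ} (hab : a ≤ b) (hc : 0 < c)
    (hg : MonotoneOn g (Icc a b)) :
    volume {x ∈ Icc a b | DifferentiableAt ℝ g x ∧ c ≤ deriv g x}
      ≤ ENNReal.ofReal ((g b - g a) / c) := by
  set G := IccExtend hab (fun x : Icc a b => g x)
  have hG : Monotone G := (monotoneOn_iff_monotone.mp hg).IccExtend hab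
  have hGg : ∀ x ∈ Ioo a b, G =ᶠ[𝓝 x] g := fun x hx => by
    filter_upwards [Ioo_mem_nhds hx.1 hx.2] with y hy
    exact IccExtend_of_mem hab _ (Ioo_subset_Icc_self hy)
  set S := Ioo a b ∩ {x | DifferentiableAt ℝ g x ∧ c ≤ deriv g x}
  have hS : MeasurableSet S :=
    measurableSet_Ioo.inter (measurableSet_setOf_differentiableAt_and_le_deriv g c)
  have hSG : ∀ x ∈ S, DifferentiableAt ℝ G x ∧ c ≤ deriv G x := fun x ⟨hx, hdiff, hle⟩ =>
    ⟨(hGg x hx).differentiableAt_iff.mpr hdiff, (hGg x hx).deriv_eq ▸ hle⟩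
  have hrightLim_b : hG.stieltjesFunction b ≤ g b := by
    calc hG.stieltjesFunction b ≤ G (b + 1) := hG.rightLim_le (lt_add_one b)
      _ = g b := by simp [G, IccExtend_of_right_le hab _ (le_add_of_nonneg_right zero_le_one)]
  have hrightLim_a : g a ≤ hG.stieltjesFunction a := by
    calc g a = G a := by simp [G, IccExtend_left]
      _ ≤ hG.stieltjesFunction a := hG.le_rightLim le_rfl
  have hmul : ENNReal.ofReal c * volume S ≤ ENNReal.ofReal (g b - g a) :=
    calc ENNReal.ofReal c * volume S ≤ hG.stieltjesFunction.measure S :=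
          hG.ofReal_mul_volume_le_stieltjesFunction_measure hS hSG
      _ ≤ hG.stieltjesFunction.measure (Ioc a b) :=
          measure_mono (inter_subset_left.trans Ioo_subset_Ioc_self)
      _ = ENNReal.ofReal (hG.stieltjesFunction b - hG.stieltjesFunction a) :=
          hG.stieltjesFunction.measure_Ioc a b
      _ ≤ ENNReal.ofReal (g b - g a) := ENNReal.ofReal_le_ofReal (by linarith)
  have hvol : volume {x ∈ Icc a b | DifferentiableAt ℝ g x ∧ c ≤ deriv g x} = volume S :=
    measure_congr (Ioo_ae_eq_Icc.symm.inter EventuallyEq.rfl)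
  rw [hvol, ENNReal.ofReal_div_of_pos hc,
    ENNReal.le_div_iff_mul_le (.inl (by simpa using hc)) (.inl (by simp)), mul_comm]
  exact hmul

theorem one_le_log_exp_mul_div {x y : ℝ} (hy : 0 < y) (hyx : y ≤ x) :
    1 ≤ log (exp 1 * x / y) := by
  rw [mul_div_assoc, log_mul (exp_pos 1).ne' (div_pos (hy.trans_le hyx) hy).ne', log_exp]
  linarith [log_nonneg ((one_le_div hy).mpr hyx)]

theorem HasDerivAt.neg_log_log_const_div {f : ℝ → ℝ} {f' K r : ℝ} (hf : HasDerivAt f f' r)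
    (hK : K ≠ 0) (hr : f r ≠ 0) (hlog : Real.log (K / f r) ≠ 0) :
    HasDerivAt (fun x => -Real.log (Real.log (K / f x))) (f' / (f r * Real.log (K / f r))) r := by
  have hquot : HasDerivAt (fun x => K / f x) ((0 * f r - K * f') / f r ^ 2) r :=
    (hasDerivAt_const r K).div hf hr
  refine ((hquot.log (div_ne_zero hK hr)).log hlog).neg.congr_deriv ?_
  field_simp
  ring

/-- Measure bound on the set `A_x` of `x`-bad radii in the proof of the Region Growing Lemma
(Lemma 4.3), for an abstract nondecreasing volume function `f`. -/
theorem bad_x_radii_measure_bound (b C : ℝ) (hb : 0 < b) (hC : 0 < C)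
    (f : ℝ → ℝ) (hf : Monotone f) (hpos : ∀ r ∈ Set.Icc 0 b, 0 < f r) :
    volume {r ∈ Set.Icc 0 b | DifferentiableAt ℝ f r ∧
        C * Real.log (Real.exp 1 * f b / f r) * f r < deriv f r}
      ≤ ENNReal.ofReal ((1 / C) * Real.log (Real.log (Real.exp 1 * f b / f 0))) := by
  have hbb : b ∈ Icc 0 b := right_mem_Icc.mpr hb.le
  have hefb : 0 < exp 1 * f b := mul_pos (exp_pos 1) (hpos b hbb)
  have hlog_pos : ∀ r ∈ Icc 0 b, 0 < log (exp 1 * f b / f r) := fun r hr =>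
    one_pos.trans_le (one_le_log_exp_mul_div (hpos r hr) (hf hr.2))
  set φ : ℝ → ℝ := fun r => -log (log (exp 1 * f b / f r))
  have hφ : MonotoneOn φ (Icc 0 b) := fun x hx y hy hxy => by
    refine neg_le_neg (log_le_log (hlog_pos y hy) (log_le_log (div_pos hefb (hpos y hy)) ?_))
    exact div_le_div_of_nonneg_left hefb.le (hpos x hx) (hf hxy)
  have hbad : {r ∈ Icc 0 b | DifferentiableAt ℝ f r ∧
      C * log (exp 1 * f b / f r) * f r < deriv f r} ⊆
      {r ∈ Icc 0 b | DifferentiableAt ℝ φ r ∧ C ≤ deriv φ r} := by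
    rintro r ⟨hr, hdiff, hlt⟩
    have hderiv := hdiff.hasDerivAt.neg_log_log_const_div hefb.ne' (hpos r hr).ne'
      (hlog_pos r hr).ne'
    refine ⟨hr, hderiv.differentiableAt, hderiv.deriv ▸ (le_div_iff₀ ?_).mpr ?_⟩
    · exact mul_pos (hpos r hr) (hlog_pos r hr)
    · linarith
  have hφb : φ b = 0 := by simp [φ, mul_div_assoc, div_self (hpos b hbb).ne']
  calc _ ≤ _ := measure_mono hbad
    _ ≤ ENNReal.ofReal ((φ b - φ 0) / C) := hφ.volume_setOf_le_deriv_le hb.le hC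
    _ = _ := by rw [hφb, zero_sub, one_div, div_eq_inv_mul]; simp only [φ, neg_neg]
end

section
/- Let b > 0 and let f : ℝ → ℝ be nondecreasing with f(r) > 0 for all r ∈ [0,b], and let C > 0. Then the Lebesgue measure of the set A = { r ∈ [0,b] : f is differentiable at r and f'(r) > C · f(r) } is at most (1/C) · ln ( f(b)/f(0) ). -/
/-!
On the bad set, `log ∘ f` has derivative `f' / f > C`. The derivative of a monotone function is
almost everywhere the density of its Stieltjes measure with respect to Lebesgue measure, so `C`
times the measure of the bad set is at most the Stieltjes mass of `(0, b)`, which is at most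
`log f(b) - log f(0)`. The endpoints `0, b` form a null set.
-/

open MeasureTheory Real Set Filter Topology Function

theorem Monotone.leftLim_stieltjesFunction_le {g : ℝ → ℝ} (hg : Monotone g) (b : ℝ) :
    leftLim hg.stieltjesFunction b ≤ g b := by
  refine _root_.le_of_tendsto (hg.stieltjesFunction.mono.tendsto_leftLim b) ?_
  filter_upwards [self_mem_nhdsWithin] with y (hy : y < b)
  rw [hg.stieltjesFunction_eq]
  exact hg.rightLim_le hy

theorem Monotone.stieltjesFunction_measure_Ioo_le {g : ℝ → ℝ} (hg : Monotone g) (a b : ℝ) :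
    hg.stieltjesFunction.measure (Ioo a b) ≤ ENNReal.ofReal (g b - g a) := by
  rw [StieltjesFunction.measure_Ioo, hg.stieltjesFunction_eq a]
  gcongr
  · exact hg.leftLim_stieltjesFunction_le b
  · exact hg.le_rightLim le_rfl

theorem Monotone.ofReal_mul_volume_le_of_le_hasDerivAt {g g' : ℝ → ℝ} (hg : Monotone g)
    {a b C : ℝ} {s : Set ℝ} (hs : s ⊆ Ioo a b) (hderiv : ∀ x ∈ s, HasDerivAt g (g' x) x)
    (hC : ∀ x ∈ s, C ≤ g' x) :
    ENNReal.ofReal C * volume s ≤ ENNReal.ofReal (g b - g a) := by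
  set ν := hg.stieltjesFunction.measure
  have hρ : ∀ᵐ x ∂volume.restrict s, ENNReal.ofReal C ≤ ν.rnDeriv volume x := by
    rw [ae_restrict_iff (measurableSet_le measurable_const (Measure.measurable_rnDeriv _ _))]
    filter_upwards [hg.ae_hasDerivAt] with x hx hxs
    calc ENNReal.ofReal C ≤ ENNReal.ofReal (g' x) := ENNReal.ofReal_le_ofReal (hC x hxs)
      _ = ENNReal.ofReal (ν.rnDeriv volume x).toReal := by rw [(hderiv x hxs).unique hx]
      _ ≤ ν.rnDeriv volume x := ENNReal.ofReal_toReal_le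
  calc ENNReal.ofReal C * volume s = ∫⁻ _ in s, ENNReal.ofReal C := (setLIntegral_const _ _).symm
    _ ≤ ∫⁻ x in s, ν.rnDeriv volume x := lintegral_mono_ae hρ
    _ ≤ ∫⁻ x in Ioo a b, ν.rnDeriv volume x := lintegral_mono_set hs
    _ ≤ ν (Ioo a b) := Measure.setLIntegral_rnDeriv_le _
    _ ≤ ENNReal.ofReal (g b - g a) := hg.stieltjesFunction_measure_Ioo_le a b

theorem MonotoneOn.ofReal_mul_volume_le_of_le_hasDerivAt {g g' : ℝ → ℝ} {a b C : ℝ}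
    (hab : a ≤ b) (hg : MonotoneOn g (Icc a b)) {s : Set ℝ} (hs : s ⊆ Ioo a b)
    (hderiv : ∀ x ∈ s, HasDerivAt g (g' x) x) (hC : ∀ x ∈ s, C ≤ g' x) :
    ENNReal.ofReal C * volume s ≤ ENNReal.ofReal (g b - g a) := by
  set G := IccExtend hab (fun x : Icc a b => g x)
  have hGmono : Monotone G := (monotoneOn_iff_monotone.1 hg).IccExtend hab
  have hG : ∀ x ∈ Icc a b, G x = g x := fun x hx => IccExtend_of_mem _ _ hx
  have hGderiv : ∀ x ∈ s, HasDerivAt G (g' x) x := fun x hx =>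
    (hderiv x hx).congr_of_eventuallyEq <|
      eventually_of_mem (Ioo_mem_nhds (hs hx).1 (hs hx).2) fun y hy => hG y (Ioo_subset_Icc_self hy)
  rw [← hG a (left_mem_Icc.2 hab), ← hG b (right_mem_Icc.2 hab)]
  exact hGmono.ofReal_mul_volume_le_of_le_hasDerivAt hs hGderiv hC

/-- Measure bound on the set `A_y` of `y`-bad radii in the proof of the Region Growing Lemma
(Lemma 4.3), for an abstract nondecreasing volume function `f`. -/
theorem bad_y_radii_measure_bound (b C : ℝ) (hb : 0 < b) (hC : 0 < C)
    (f : ℝ → ℝ) (hf : Monotone f) (hpos : ∀ r ∈ Set.Icc 0 b, 0 < f r) :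
    volume {r ∈ Set.Icc 0 b | DifferentiableAt ℝ f r ∧ C * f r < deriv f r}
      ≤ ENNReal.ofReal ((1 / C) * Real.log (f b / f 0)) := by
  set A := {r ∈ Icc 0 b | DifferentiableAt ℝ f r ∧ C * f r < deriv f r}
  have hlog_mono : MonotoneOn (fun r => log (f r)) (Icc 0 b) := fun x hx _ _ hxy =>
    log_le_log (hpos x hx) (hf hxy)
  have hderiv : ∀ x ∈ A ∩ Ioo 0 b, HasDerivAt (fun r => log (f r)) (deriv f x / f x) x :=
    fun x hx => hx.1.2.1.hasDerivAt.log (hpos x hx.1.1).ne'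
  have hC_le : ∀ x ∈ A ∩ Ioo 0 b, C ≤ deriv f x / f x := fun x hx =>
    ((lt_div_iff₀ (hpos x hx.1.1)).2 hx.1.2.2).le
  have hA_eq_interior : volume A = volume (A ∩ Ioo 0 b) := by
    rw [measure_congr (EventuallyEq.rfl.inter Ioo_ae_eq_Icc), inter_eq_left.2 (sep_subset _ _)]
  have hmass := hlog_mono.ofReal_mul_volume_le_of_le_hasDerivAt hb.le inter_subset_right hderiv hC_le
  rw [← log_div (hpos b (right_mem_Icc.2 hb.le)).ne' (hpos 0 (left_mem_Icc.2 hb.le)).ne',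
    mul_comm, ← hA_eq_interior] at hmass
  rwa [one_div_mul_eq_div, ENNReal.ofReal_div_of_pos hC, ENNReal.le_div_iff_mul_le
    (Or.inl (ENNReal.ofReal_pos.2 hC).ne') (Or.inl ENNReal.ofReal_ne_top)]
end
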